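/- In S(G), for all s,t in G the idempotents ε_s = [s][s*] and ε_t = [t][t*] commute: ε_s ε_t = ε_t ε_s. -/
import Mathlib


universe u v

/-- An inverse semigroup: every element has a unique generalized inverse. -/
class InverseSemigroup (G : Type u) extends Semigroup G, Star G where
  mul_star_mul_self : ∀ s : G, s * star s * s = s
  star_mul_self_star : ∀ s : G, star s * s * star s = star s
  star_unique : ∀ s t : G, s * t * s = s → t * s * t = t → t = star s

variable (G : Type u) [InverseSemigroup G]

/-- The defining relations of the prefix expansion S(G). -/
inductive ExpRel : FreeSemigroup G → FreeSemigroup G → Prop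
  | rel1 (s t : G) : ExpRel (.of s * .of t * .of (star t)) (.of (s * t) * .of (star t))
  | rel2 (s t : G) : ExpRel (.of (star s) * .of s * .of t) (.of (star s) * .of (s * t))
  | rel3 (s : G) : ExpRel (.of s * .of (star s) * .of s) (.of s)

/-- The congruence generated by the defining relations. -/
def expCon : Con (FreeSemigroup G) := conGen (ExpRel G)

/-- The prefix expansion S(G) of the inverse semigroup G. -/
def SG : Type u := (expCon G).Quotient

instance : Semigroup (SG G) := Con.semigroup (expCon G)

variable {G}

/-- The canonical generator [s] of S(G). -/
def gen (s : G) : SG G := ((FreeSemigroup.of s : FreeSemigroup G) : (expCon G).Quotient)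

/-- ε_s = [s][s*] in S(G). -/
def eps (s : G) : SG G := gen s * gen (star s)

/-- ε_{s₁}⋯ε_{s_n}·x for a list [s₁,…,s_n]. -/
def epsList (l : List G) (x : SG G) : SG G := (l.map eps).foldr (· * ·) x

/-- ε_A · x for a finite set A ⊆ G. -/
noncomputable def epsSet (A : Finset G) (x : SG G) : SG G := epsList A.toList x

/-- The normal form condition on the pair (A, t). -/
def IsNormalForm (A : Finset G) (t : G) : Prop :=
  t ∈ A ∧ t * star t ∈ A ∧ ∀ a ∈ A, a * star a = t * star t

/-- A partial homomorphism from an inverse semigroup to a semigroup. -/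
structure IsPartialHom {H : Type v} [Semigroup H] (π : G → H) : Prop where
  rel1 : ∀ s t : G, π s * π t * π (star t) = π (s * t) * π (star t)
  rel2 : ∀ s t : G, π (star s) * π s * π t = π (star s) * π (s * t)
  rel3 : ∀ s : G, π s * π (star s) * π s = π s

/-- The natural partial order: x ≤ y iff x = y·e for some idempotent e. -/
def natLE {H : Type v} [Semigroup H] (x y : H) : Prop := ∃ e : H, e * e = e ∧ x = y * e

/-- A filter in an inverse semigroup. -/
def IsFilter (ξ : Set G) : Prop :=
  ξ.Nonempty ∧ ∀ e s : G, e * e = e → (e * s ∈ ξ ↔ e ∈ ξ ∧ s ∈ ξ)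

section AuxG

open InverseSemigroup

/-- Contexted rewrite helper for two-letter rules. -/
private lemma ctx2 {a b c : G} (h : a * b = c) (x : G) : a * (b * x) = c * x := by
  rw [← mul_assoc, h]

private lemma star_star' (s : G) : star (star s) = s :=
  (star_unique (star s) s (star_mul_self_star s) (mul_star_mul_self s)).symm

private lemma star_idem' {e : G} (h : e * e = e) : star e = e :=
  (star_unique e e (by rw [h, h]) (by rw [h, h])).symm

private lemma triple (a : G) : a * (star a * a) = a := by
  rw [← mul_assoc, mul_star_mul_self]

private lemma triple' (a : G) : star a * (a * star a) = star a := by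
  rw [← mul_assoc, star_mul_self_star]

private lemma triple_ctx (a z : G) : a * (star a * (a * z)) = a * z := by
  simp only [← mul_assoc]; rw [mul_star_mul_self]

private lemma triple_ctx' (a z : G) : star a * (a * (star a * z)) = star a * z := by
  simp only [← mul_assoc]; rw [star_mul_self_star]

private lemma idem_mul_idem {e f : G} (he : e * e = e) (hf : f * f = f) :
    (e * f) * (e * f) = e * f := by
  have key1 := mul_star_mul_self (e * f)
  have key2 := star_mul_self_star (e * f)
  set i := star (e * f) with hi
  have key2ctx : ∀ x : G, i * (e * (f * (i * x))) = i * x := by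
    intro x
    simp only [← mul_assoc]
    simp only [← mul_assoc] at key2
    rw [key2]
  have h1 : (e * f) * (f * i * e) * (e * f) = e * f := by
    simp only [mul_assoc] at key1 ⊢
    simp only [ctx2 hf, ctx2 he]
    exact key1
  have h2 : (f * i * e) * (e * f) * (f * i * e) = f * i * e := by
    simp only [mul_assoc]
    rw [ctx2 hf, ctx2 he, key2ctx]
  have hfie : f * i * e = i := star_unique (e * f) (f * i * e) h1 h2
  have hii : i * i = i := by
    calc i * i = (f * i * e) * (f * i * e) := by rw [hfie]
      _ = f * (i * (e * (f * (i * e)))) := by simp only [mul_assoc]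
      _ = f * (i * e) := by rw [key2ctx]
      _ = f * i * e := by rw [mul_assoc]
      _ = i := hfie
  have hef : e * f = i := by
    calc e * f = star (star (e * f)) := (star_star' _).symm
      _ = star i := by rw [← hi]
      _ = i := star_idem' hii
  rw [hef, hii]

private lemma idem_comm {e f : G} (he : e * e = e) (hf : f * f = f) :
    e * f = f * e := by
  have hef := idem_mul_idem he hf
  have hfe := idem_mul_idem hf he
  have h1 : (e * f) * (f * e) * (e * f) = e * f := by
    simp only [mul_assoc] at hef ⊢
    simp only [ctx2 hf, ctx2 he]
    exact hef
  have h2 : (f * e) * (e * f) * (f * e) = f * e := by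
    simp only [mul_assoc] at hfe ⊢
    simp only [ctx2 he, ctx2 hf]
    exact hfe
  have := star_unique (e * f) (f * e) h1 h2
  rw [star_idem' hef] at this
  exact this.symm

private lemma idem_rr (s : G) : (s * star s) * (s * star s) = s * star s := by
  rw [← mul_assoc, mul_star_mul_self]

private lemma idem_ll (s : G) : (star s * s) * (star s * s) = star s * s := by
  rw [← mul_assoc, star_mul_self_star]

/-- contexted commutation of ss* and tt* -/
private lemma comm_ctx (s t : G) (z : G) :
    s * (star s * (t * (star t * z))) = t * (star t * (s * (star s * z))) := by
  have h := idem_comm (idem_rr s) (idem_rr t)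
  simp only [← mul_assoc] at h ⊢
  rw [h]

private lemma comm_nt (s t : G) :
    s * (star s * (t * star t)) = t * (star t * (s * star s)) := by
  have h := idem_comm (idem_rr s) (idem_rr t)
  simp only [← mul_assoc] at h ⊢
  rw [h]

private lemma comm_ctx2 (x y z : G) :
    y * (star y * (star x * (x * z))) = star x * (x * (y * (star y * z))) := by
  have h := idem_comm (idem_rr y) (idem_ll x)
  simp only [← mul_assoc] at h ⊢
  rw [h]

private lemma isg_star_mul (x y : G) : star (x * y) = star y * star x := by
  have h1 : (x * y) * (star y * star x) * (x * y) = x * y := by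
    simp only [mul_assoc]
    rw [comm_ctx2 x y y, triple y, triple_ctx x y]
  have h2 : (star y * star x) * (x * y) * (star y * star x) = star y * star x := by
    simp only [mul_assoc]
    rw [← comm_ctx2 x y (star x), triple' x, triple_ctx' y (star x)]
  exact (star_unique (x * y) (star y * star x) h1 h2).symm

/-- (s s* t)(t* s) = t t* s -/
private lemma g3 (s t : G) : (s * (star s * t)) * (star t * s) = t * (star t * s) := by
  calc (s * (star s * t)) * (star t * s)
      = s * (star s * (t * (star t * s))) := by simp only [mul_assoc]
    _ = t * (star t * (s * (star s * s))) := comm_ctx s t s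
    _ = t * (star t * s) := by rw [triple s]

/-- s* t t* = s* t t* s s* -/
private lemma g4 (s t : G) :
    (star s * t) * star t = (star s * t) * ((star t * s) * star s) := by
  calc (star s * t) * star t
      = star s * (t * star t) := by simp only [mul_assoc]
    _ = star s * (s * (star s * (t * star t))) := (triple_ctx' s (t * star t)).symm
    _ = star s * (t * (star t * (s * star s))) := by rw [comm_nt s t]
    _ = (star s * t) * ((star t * s) * star s) := by simp only [mul_assoc]

private lemma g1 (s t : G) : star t * s = star (star s * t) := by
  rw [isg_star_mul, star_star']

end AuxG

section AuxSG

/-- The three defining relations, at the level of S(G). -/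
private lemma sgR1 (a b : G) :
    gen a * gen b * gen (star b) = gen (a * b) * gen (star b) :=
  (Con.eq _).mpr (ConGen.Rel.of _ _ (ExpRel.rel1 a b))

private lemma sgR2 (a b : G) :
    gen (star a) * gen a * gen b = gen (star a) * gen (a * b) :=
  (Con.eq _).mpr (ConGen.Rel.of _ _ (ExpRel.rel2 a b))

private lemma sgR3 (a : G) :
    gen a * gen (star a) * gen a = gen a :=
  (Con.eq _).mpr (ConGen.Rel.of _ _ (ExpRel.rel3 a))

/-- R1 in right-associated form with a right context. -/
private lemma R1c (a b c : G) (h : c = star b) (y : SG G) :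
    gen a * (gen b * (gen c * y)) = gen (a * b) * (gen c * y) := by
  subst h
  rw [← mul_assoc, ← mul_assoc, sgR1, mul_assoc]

private lemma R1e (a b c : G) (h : c = star b) :
    gen a * (gen b * gen c) = gen (a * b) * gen c := by
  subst h
  rw [← mul_assoc, sgR1]

private lemma R2e (a b c : G) (h : a = star b) :
    gen a * (gen b * gen c) = gen a * gen (b * c) := by
  subst h
  rw [← mul_assoc, sgR2]

private lemma R3c (a b c : G) (h1 : b = star a) (h2 : c = a) (y : SG G) :
    gen a * (gen b * (gen c * y)) = gen a * y := by
  subst h1; subst h2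
  rw [← mul_assoc, ← mul_assoc, sgR3]

end AuxSG

theorem eps_commute (G : Type u) [InverseSemigroup G] (s t : G) :
    eps s * eps t = eps t * eps (G := G) s := by
  have h1 : star t * s = star (star s * t) := g1 s t
  have h2 : star s * t = star (star t * s) := g1 t s
  show (gen s * gen (star s)) * (gen t * gen (star t))
      = (gen t * gen (star t)) * (gen s * gen (star s))
  calc (gen s * gen (star s)) * (gen t * gen (star t))
      = gen s * (gen (star s) * (gen t * gen (star t))) := by
        simp only [mul_assoc]
    _ = gen s * (gen (star s * t) * gen (star t)) := by
        conv_lhs => rw [R1e (star s) t (star t) rfl]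
    _ = gen s * (gen (star s * t) * (gen (star t * s) * (gen (star s * t) * gen (star t)))) := by
        conv_lhs => rw [← R3c (star s * t) (star t * s) (star s * t) h1 rfl (gen (star t))]
    _ = gen (s * (star s * t)) * (gen (star t * s) * (gen (star s * t) * gen (star t))) := by
        conv_lhs => rw [R1c s (star s * t) (star t * s) h1]
    _ = gen ((s * (star s * t)) * (star t * s)) * (gen (star s * t) * gen (star t)) := by
        conv_lhs => rw [R1c (s * (star s * t)) (star t * s) (star s * t) h2]
    _ = gen (t * (star t * s)) * (gen (star s * t) * gen (star t)) := by
        rw [g3 s t]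
    _ = gen t * (gen (star t * s) * (gen (star s * t) * gen (star t))) := by
        conv_lhs => rw [← R1c t (star t * s) (star s * t) h2]
    _ = gen t * (gen (star t * s) * gen ((star s * t) * star t)) := by
        conv_lhs => rw [R2e (star t * s) (star s * t) (star t) h1]
    _ = gen t * (gen (star t * s) * gen ((star s * t) * ((star t * s) * star s))) := by
        rw [g4 s t]
    _ = gen t * (gen (star t * s) * (gen (star s * t) * gen ((star t * s) * star s))) := by
        conv_lhs => rw [← R2e (star t * s) (star s * t) ((star t * s) * star s) h1]
    _ = gen t * (gen (star t * s) * (gen (star s * t) * (gen (star t * s) * gen (star s)))) := by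
        conv_lhs => rw [← R2e (star s * t) (star t * s) (star s) h2]
    _ = gen t * (gen (star t * s) * gen (star s)) := by
        conv_lhs => rw [R3c (star t * s) (star s * t) (star t * s) h2 rfl (gen (star s))]
    _ = gen t * (gen (star t) * (gen s * gen (star s))) := by
        conv_lhs => rw [← R1e (star t) s (star s) rfl]
    _ = (gen t * gen (star t)) * (gen s * gen (star s)) := by
        simp only [mul_assoc]
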